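/- arXiv:2603.22463 — 3 statements merged into one kernel-verified Lean document; each statement's English description precedes it below -/
import Mathlib

section
/- Let t ≥ 1 satisfy [S]ᵗ(1_{T^{≤t}}·w_t) > 0. Then for every prefix-closed function f with branches (L_j)_{j≥0}, the trace semantics ⟦S⟧f is well defined (i.e. [S]w > 0). Moreover, if f ≤ M for some M ∈ [0,∞], then, setting α_t := [S]ᵗw_t / [S]ᵗ(1_{T^{≤t}}·w_t), the following bounds hold: [S]ᵗ(f_t·1_{L^{≤t}∩T^{≤t}}·w_t) / [S]ᵗw_t ≤ ⟦S⟧f ≤ ([S]ᵗ(f_t·1_{L^{≤t}∩T^{≤t}}·w_t) / [S]ᵗw_t)·α_t + M·(α_t − 1). -/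
open MeasureTheory ProbabilityTheory Filter Set
open scoped ENNReal

namespace PaperPPG

variable {Ω : Type*} [MeasurableSpace Ω]

/-- Concatenation of a finite word with an infinite sequence. -/
def cat {j : ℕ} (u : Fin j → Ω) (ω : ℕ → Ω) : ℕ → Ω :=
  fun n => if h : n < j then u ⟨n, h⟩ else ω (n - j)

/-- Extension of a finite word by the constant `star`. -/
def extendW (star : Ω) {j : ℕ} (u : Fin j → Ω) : ℕ → Ω :=
  fun n => if h : n < j then u ⟨n, h⟩ else star

/-- First `t` letters of an infinite sequence. -/
def take (t : ℕ) (ω : ℕ → Ω) : Fin t → Ω := fun i => ω i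

/-- Cylinder generated by a set of words of length `j`. -/
def cyl {j : ℕ} (B : Set (Fin j → Ω)) : Set (ℕ → Ω) := {ω | take j ω ∈ B}

/-- `u` is a prefix of `v`. -/
def IsPref {i j : ℕ} (u : Fin i → Ω) (v : Fin j → Ω) : Prop :=
  ∃ h : i ≤ j, ∀ k : Fin i, u k = v (Fin.castLE h k)

/-- A sequence of languages, `L j ⊆ Ω^j`, is prefix-free. -/
def PrefixFree (L : (j : ℕ) → Set (Fin j → Ω)) : Prop :=
  ∀ i j : ℕ, i ≠ j → ∀ u ∈ L i, ∀ v ∈ L j, ¬ IsPref u v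

/-- `L^{≤ t+1}`: words of length `t+1` having a prefix in some `L j` (necessarily `j ≤ t+1`). -/
def Lle (L : (j : ℕ) → Set (Fin j → Ω)) (t : ℕ) : Set (Fin (t + 1) → Ω) :=
  {v | ∃ j : ℕ, ∃ u ∈ L j, IsPref u v}

/-- `L^{> t+1}`: words of length `t+1` that are prefixes of members of some `L j` with `j > t+1`. -/
def Lgt (L : (j : ℕ) → Set (Fin j → Ω)) (t : ℕ) : Set (Fin (t + 1) → Ω) :=
  {u | ∃ j : ℕ, t + 1 < j ∧ ∃ v ∈ L j, IsPref u v}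

/-- `T_{n+1}`: words of length `n+1` whose letters are outside `T` except the last one, in `T`. -/
def Tword (T : Set Ω) (n : ℕ) : Set (Fin (n + 1) → Ω) :=
  {u | (∀ i : Fin (n + 1), (i : ℕ) < n → u i ∉ T) ∧ u (Fin.last n) ∈ T}

/-- `T^{≤ t+1}`: words of length `t+1` with some letter in `T`. -/
def Tle (T : Set Ω) (t : ℕ) : Set (Fin (t + 1) → Ω) := {u | ∃ i, u i ∈ T}

/-- Infinite sequences that terminate (enter `T`) in finite time. -/
def Tf (T : Set Ω) : Set (ℕ → Ω) := {ω | ∃ j, ω j ∈ T}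

/-- T-respectfulness of a sequence of languages. -/
def TRespectful (T : Set Ω) (L : (j : ℕ) → Set (Fin j → Ω)) : Prop :=
  ∀ n : ℕ, Lgt L n ∩ Tword T n = ∅

/-- Truncated weight of a word of length `t+1`. -/
noncomputable def wt (sc : Ω → ℝ≥0∞) (t : ℕ) (u : Fin (t + 1) → Ω) : ℝ≥0∞ :=
  ∏ i, sc (u i)

/-- Weight of an infinite sequence: the limit (infimum) of the nonincreasing
sequence of partial products of the scores. -/
noncomputable def w (sc : Ω → ℝ≥0∞) (ω : ℕ → Ω) : ℝ≥0∞ :=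
  ⨅ t : ℕ, ∏ i : Fin (t + 1), sc (ω i)

/-- Finite approximation `f_t` of a function on infinite sequences. -/
noncomputable def ft (star : Ω) (t : ℕ) (f : (ℕ → Ω) → ℝ≥0∞) (u : Fin (t + 1) → Ω) : ℝ≥0∞ :=
  f (extendW star u)

/-- A prefix-closed function with branches `L`. -/
structure IsPrefixClosed (T : Set Ω) (f : (ℕ → Ω) → ℝ≥0∞)
    (L : (j : ℕ) → Set (Fin j → Ω)) : Prop where
  measF : Measurable f
  measL : ∀ j, MeasurableSet (L j)
  pf : PrefixFree L
  supp : Function.support f = ⋃ j, cyl (L j)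
  const : ∀ j : ℕ, ∀ u ∈ L j, ∀ ω ω' : ℕ → Ω, f (cat u ω) = f (cat u ω')
  resp : TRespectful T L

/-- Sequences that, from the first moment (if any) they enter `T`, remain in `T` forever. -/
def Theta (T : Set Ω) : Set (ℕ → Ω) :=
  {ω | ∀ n, ω n ∉ T} ∪ ⋃ j : ℕ, {ω | (∀ n, n < j → ω n ∉ T) ∧ ∀ n, j ≤ n → ω n ∈ T}

/-- Finite version of `Theta`, on words of length `n+1`. -/
def ThetaW (T : Set Ω) (n : ℕ) : Set (Fin (n + 1) → Ω) :=
  {u | ∀ i, u i ∉ T} ∪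
    ⋃ j : ℕ, {u | j ≤ n ∧ (∀ i : Fin (n + 1), (i : ℕ) < j → u i ∉ T) ∧
      ∀ i : Fin (n + 1), j ≤ (i : ℕ) → u i ∈ T}

/-- The lifting of `h : Ω → ℝ≥0∞` (supported on `T`) to infinite sequences. -/
noncomputable def lift (T : Set Ω) (h : Ω → ℝ≥0∞) (ω : ℕ → Ω) : ℝ≥0∞ :=
  ∑' n : ℕ, (cyl (Tword T n)).indicator 1 ω * h (ω n)

/-- The branches of the lifting of `h`: `L 0 = ∅` and `L j = (Ω∖T)^{j-1}·(T ∩ supp h)`. -/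
def liftBranch (T : Set Ω) (h : Ω → ℝ≥0∞) : (j : ℕ) → Set (Fin j → Ω)
  | 0 => ∅
  | n + 1 => {u | (∀ i : Fin (n + 1), (i : ℕ) < n → u i ∉ T) ∧
      u (Fin.last n) ∈ T ∩ Function.support h}

/-- The filtering distribution at time `t+1` induced by a measure on words of
length `t+1` and the weight `wt sc t` as global potential. -/
noncomputable def filt (sc : Ω → ℝ≥0∞) (t : ℕ) (μ : Measure (Fin (t + 1) → Ω)) : Measure Ω :=
  (∫⁻ u, wt sc t u ∂μ)⁻¹ • Measure.map (fun u => u (Fin.last t)) (μ.withDensity (wt sc t))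

/-- The data of a Markov chain: an initial law `μ1`, a Markov transition kernel `κ`,
the laws `μF n` of the first `n+1` states, and the law `μI` on infinite
trajectories, uniquely determined by the Ionescu-Tulcea theorem through the
cylinder condition `proj`. -/
structure MarkovSetting (Ω : Type*) [MeasurableSpace Ω] where
  μ1 : Measure Ω
  prob1 : IsProbabilityMeasure μ1
  κ : Kernel Ω Ω
  markov : IsMarkovKernel κ
  μF : (n : ℕ) → Measure (Fin (n + 1) → Ω)
  μI : Measure (ℕ → Ω)
  probI : IsProbabilityMeasure μI
  base : μF 0 = Measure.map (fun x => fun _ : Fin 1 => x) μ1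
  step : ∀ n : ℕ, μF (n + 1) =
    Measure.map (fun p : (Fin (n + 1) → Ω) × Ω => Fin.snoc p.1 p.2)
      ((μF n) ⊗ₘ (κ.comap (fun v => v (Fin.last n)) (measurable_pi_apply _)))
  proj : ∀ n : ℕ, Measure.map (take (n + 1)) μI = μF n

section Aux

variable {T : Set Ω} {sc : Ω → ℝ≥0∞} {t : ℕ}

lemma measurable_take (t : ℕ) : Measurable (take t : (ℕ → Ω) → Fin t → Ω) :=
  measurable_pi_lambda _ fun i => measurable_pi_apply _

lemma measurable_extendW (star : Ω) (j : ℕ) :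
    Measurable (extendW star : (Fin j → Ω) → ℕ → Ω) := by
  apply measurable_pi_lambda
  intro n
  unfold extendW
  by_cases h : n < j
  · simp only [dif_pos h]; exact measurable_pi_apply _
  · simp only [dif_neg h]; exact measurable_const

lemma measurable_wt (hsc : Measurable sc) (t : ℕ) : Measurable (wt sc t) := by
  unfold wt
  exact Finset.measurable_prod _ fun i _ => hsc.comp (measurable_pi_apply i)

lemma measurable_w (hsc : Measurable sc) : Measurable (w sc) := by
  unfold w
  exact Measurable.iInf fun s =>
    Finset.measurable_prod _ fun i _ => hsc.comp (measurable_pi_apply _)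

lemma measurableSet_Tle (hT : MeasurableSet T) (t : ℕ) : MeasurableSet (Tle T t) := by
  have : Tle T t = ⋃ i : Fin (t + 1), (fun u : Fin (t + 1) → Ω => u i) ⁻¹' T := by
    ext u; simp [Tle]
  rw [this]
  exact MeasurableSet.iUnion fun i => (measurable_pi_apply i) hT

lemma measurableSet_Lle {L : (j : ℕ) → Set (Fin j → Ω)} (hL : ∀ j, MeasurableSet (L j))
    (t : ℕ) : MeasurableSet (Lle L t) := by
  have hU : Lle L t = ⋃ j : ℕ, {v : Fin (t + 1) → Ω | ∃ u ∈ L j, IsPref u v} := by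
    ext v; simp [Lle]
  rw [hU]
  refine MeasurableSet.iUnion fun j => ?_
  by_cases h : j ≤ t + 1
  · have he : {v : Fin (t + 1) → Ω | ∃ u ∈ L j, IsPref u v} =
        (fun v (k : Fin j) => v (Fin.castLE h k)) ⁻¹' (L j) := by
      ext v
      constructor
      · rintro ⟨u, hu, h', heq⟩
        have : (fun k : Fin j => v (Fin.castLE h k)) = u := by
          funext k; rw [heq k]
        simpa [Set.mem_preimage, this] using hu
      · intro hv
        exact ⟨_, hv, h, fun k => rfl⟩
    rw [he]
    exact (measurable_pi_lambda _ fun k => measurable_pi_apply _) (hL j)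
  · have he : {v : Fin (t + 1) → Ω | ∃ u ∈ L j, IsPref u v} = ∅ := by
      ext v
      simp only [Set.mem_setOf_eq, Set.mem_empty_iff_false, iff_false, not_exists]
      rintro u ⟨hu, h', -⟩
      exact h h'
    rw [he]; exact MeasurableSet.empty

lemma measurable_snoc_fun (n : ℕ) :
    Measurable (fun p : (Fin (n + 1) → Ω) × Ω => Fin.snoc p.1 p.2 : _ → Fin (n + 2) → Ω) := by
  apply measurable_pi_lambda
  intro i
  refine Fin.lastCases ?_ ?_ i
  · simp only [Fin.snoc_last]; exact measurable_snd
  · intro j; simp only [Fin.snoc_castSucc]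
    exact measurable_fst.eval

lemma probF (M : MarkovSetting Ω) (n : ℕ) : IsProbabilityMeasure (M.μF n) := by
  induction n with
  | zero =>
    rw [M.base]
    haveI := M.prob1
    exact Measure.isProbabilityMeasure_map
      (measurable_pi_lambda _ fun _ => measurable_id).aemeasurable
  | succ n ih =>
    rw [M.step n]
    haveI := M.markov
    haveI := ih
    exact Measure.isProbabilityMeasure_map (measurable_snoc_fun n).aemeasurable

lemma theta_ae (M : MarkovSetting Ω) (hT : MeasurableSet T)
    (hκT : ∀ ω ∈ T, M.κ ω = Measure.dirac ω) : ∀ᵐ ω ∂M.μI, ω ∈ Theta T := by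
  classical
  have hsub : (Theta T)ᶜ ⊆ ⋃ n, {ω : ℕ → Ω | ω n ∈ T ∧ ω (n + 1) ∉ T} := by
    intro ω hω
    by_contra hc
    simp only [Set.mem_iUnion, Set.mem_setOf_eq, not_exists, not_and, not_not] at hc
    apply hω
    by_cases hex : ∃ n, ω n ∈ T
    · right
      refine Set.mem_iUnion.mpr ⟨Nat.find hex, ?_, ?_⟩
      · exact fun n hn => Nat.find_min hex hn
      · intro n hn
        induction n with
        | zero =>
          have : Nat.find hex = 0 := Nat.le_zero.mp hn
          rw [← this]; exact Nat.find_spec hex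
        | succ m ihm =>
          rcases Nat.lt_or_ge (Nat.find hex) (m + 1) with h' | h'
          · exact hc m (ihm (Nat.lt_succ_iff.mp h'))
          · have : Nat.find hex = m + 1 := le_antisymm hn h'
            rw [← this]; exact Nat.find_spec hex
    · left
      exact fun n hn => hex ⟨n, hn⟩
  have hzero : ∀ n, M.μI {ω : ℕ → Ω | ω n ∈ T ∧ ω (n + 1) ∉ T} = 0 := by
    intro n
    haveI := M.markov
    haveI := probF M n
    set κ' := M.κ.comap (fun v : Fin (n + 1) → Ω => v (Fin.last n)) (measurable_pi_apply _)
      with hκ'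
    set C : Set (Fin (n + 2) → Ω) :=
      (fun u : Fin (n + 2) → Ω => u (Fin.castSucc (Fin.last n))) ⁻¹' T ∩
        (fun u : Fin (n + 2) → Ω => u (Fin.last (n + 1))) ⁻¹' Tᶜ with hC
    have hCset : MeasurableSet C :=
      ((measurable_pi_apply _) hT).inter ((measurable_pi_apply _) hT.compl)
    have h1 : {ω : ℕ → Ω | ω n ∈ T ∧ ω (n + 1) ∉ T} = take (n + 2) ⁻¹' C := by
      ext ω
      simp only [hC, Set.mem_setOf_eq, Set.mem_preimage, Set.mem_inter_iff, Set.mem_compl_iff,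
        take]
      rfl
    rw [h1, ← Measure.map_apply (measurable_take _) hCset, M.proj (n + 1), M.step n,
      Measure.map_apply (measurable_snoc_fun n) hCset]
    have h2 : (fun p : (Fin (n + 1) → Ω) × Ω => Fin.snoc p.1 p.2) ⁻¹' C =
        {p : (Fin (n + 1) → Ω) × Ω | p.1 (Fin.last n) ∈ T ∧ p.2 ∉ T} := by
      ext p
      simp [hC, Fin.snoc_castSucc, Fin.snoc_last]
    rw [h2]
    have hmp : MeasurableSet {p : (Fin (n + 1) → Ω) × Ω | p.1 (Fin.last n) ∈ T ∧ p.2 ∉ T} :=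
      ((measurable_pi_apply _).comp measurable_fst hT).inter (measurable_snd hT.compl)
    rw [Measure.compProd_apply hmp]
    have : ∀ v : Fin (n + 1) → Ω,
        κ' v (Prod.mk v ⁻¹' {p : (Fin (n + 1) → Ω) × Ω | p.1 (Fin.last n) ∈ T ∧ p.2 ∉ T}) = 0 := by
      intro v
      by_cases hv : v (Fin.last n) ∈ T
      · have hpre : Prod.mk v ⁻¹'
            {p : (Fin (n + 1) → Ω) × Ω | p.1 (Fin.last n) ∈ T ∧ p.2 ∉ T} = Tᶜ := by
          ext x; simp [hv]
        rw [hpre, hκ', Kernel.comap_apply, hκT _ hv, Measure.dirac_apply' _ hT.compl]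
        simp [hv]
      · have hpre : Prod.mk v ⁻¹'
            {p : (Fin (n + 1) → Ω) × Ω | p.1 (Fin.last n) ∈ T ∧ p.2 ∉ T} = ∅ := by
          ext x; simp [hv]
        rw [hpre]; simp
    exact (lintegral_congr fun v => this v).trans (by simp)
  rw [Filter.eventually_iff, MeasureTheory.mem_ae_iff]
  exact measure_mono_null hsub (measure_iUnion_null hzero)

lemma partial_antitone (hsc1 : ∀ x, sc x ≤ 1) (ω : ℕ → Ω) :
    Antitone (fun s : ℕ => ∏ i : Fin (s + 1), sc (ω i)) := by
  apply antitone_nat_of_succ_le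
  intro s
  rw [Fin.prod_univ_castSucc]
  calc (∏ i : Fin (s + 1), sc (ω (Fin.castSucc i))) * sc (ω (Fin.last (s + 1)))
      ≤ (∏ i : Fin (s + 1), sc (ω (Fin.castSucc i))) * 1 := mul_le_mul_right (hsc1 _) _
    _ = ∏ i : Fin (s + 1), sc (ω i) := by
        rw [mul_one]; exact Finset.prod_congr rfl fun i _ => by rw [Fin.coe_castSucc]

lemma w_le_wt (ω : ℕ → Ω) : w sc ω ≤ wt sc t (take (t + 1) ω) :=
  iInf_le _ t

lemma w_eq_wt (hsc1 : ∀ x, sc x ≤ 1) (ω : ℕ → Ω)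
    (h : ∀ n, t + 1 ≤ n → sc (ω n) = 1) : w sc ω = wt sc t (take (t + 1) ω) := by
  have hstop : ∀ s, t ≤ s → (∏ i : Fin (s + 1), sc (ω i)) = ∏ i : Fin (t + 1), sc (ω i) := by
    intro s hs
    induction s, hs using Nat.le_induction with
    | base => rfl
    | succ s hs ih =>
      rw [Fin.prod_univ_castSucc]
      have h1 : sc (ω ((Fin.last (s + 1) : Fin (s + 2)) : ℕ)) = 1 := by
        rw [Fin.val_last]; exact h (s + 1) (by omega)
      have h2 : (∏ i : Fin (s + 1), sc (ω (Fin.castSucc i))) = ∏ i : Fin (s + 1), sc (ω i) :=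
        Finset.prod_congr rfl fun i _ => by rw [Fin.coe_castSucc]
      rw [h1, mul_one, h2, ih]
  refine le_antisymm (w_le_wt ω) (le_iInf fun s => ?_)
  rcases le_total s t with hst | hts
  · exact le_trans (le_of_eq (hstop t le_rfl).symm) (partial_antitone hsc1 ω hst)
  · exact le_of_eq (hstop s hts).symm

lemma theta_from (hθ : ω ∈ Theta T) (hTle : take (t + 1) ω ∈ Tle T t) :
    ∃ j₀, j₀ ≤ t ∧ (∀ n, n < j₀ → ω n ∉ T) ∧ ∀ n, j₀ ≤ n → ω n ∈ T := by
  obtain ⟨i, hi⟩ := hTle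
  rcases hθ with hnever | hterm
  · exact absurd hi (hnever i)
  · obtain ⟨j₀, hj₁, hj₂⟩ := Set.mem_iUnion.mp hterm
    refine ⟨j₀, ?_, hj₁, hj₂⟩
    by_contra hc
    push_neg at hc
    have hi' := i.isLt
    exact hj₁ i (by omega) hi

lemma f_eq_ft {f : (ℕ → Ω) → ℝ≥0∞} {L : (j : ℕ) → Set (Fin j → Ω)}
    (hf : IsPrefixClosed T f L) (star : Ω) (ω : ℕ → Ω)
    (h : take (t + 1) ω ∈ Lle L t) : f ω = ft star t f (take (t + 1) ω) := by
  obtain ⟨j, u, hu, hle, heq⟩ := h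
  have hval : ∀ k : Fin j, u k = ω k := fun k => heq k
  have h1 : ω = cat u (fun n => ω (n + j)) := by
    funext n
    unfold cat
    by_cases hn : n < j
    · rw [dif_pos hn, hval ⟨n, hn⟩]
    · rw [dif_neg hn]
      show ω n = ω (n - j + j)
      rw [Nat.sub_add_cancel (le_of_not_gt hn)]
  have h2 : extendW star (take (t + 1) ω) =
      cat u (fun n => if n + j < t + 1 then ω (n + j) else star) := by
    funext n
    unfold extendW cat take
    by_cases hn : n < j
    · have hn' : n < t + 1 := lt_of_lt_of_le hn hle
      simp only [dif_pos hn, dif_pos hn', hval ⟨n, hn⟩]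
    · have hnj : n - j + j = n := Nat.sub_add_cancel (le_of_not_gt hn)
      simp only [dif_neg hn, hnj]
      by_cases hn' : n < t + 1
      · simp only [dif_pos hn', if_pos hn']
      · simp only [dif_neg hn', if_neg hn']
  calc f ω = f (cat u fun n => ω (n + j)) := by rw [← h1]
    _ = f (cat u fun n => if n + j < t + 1 then ω (n + j) else star) := hf.const j u hu _ _
    _ = f (extendW star (take (t + 1) ω)) := by rw [h2]
    _ = ft star t f (take (t + 1) ω) := rfl

lemma f_eq_zero {f : (ℕ → Ω) → ℝ≥0∞} {L : (j : ℕ) → Set (Fin j → Ω)}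
    (hf : IsPrefixClosed T f L) (ω : ℕ → Ω) (hθ : ω ∈ Theta T)
    (hTle : take (t + 1) ω ∈ Tle T t) (hL : take (t + 1) ω ∉ Lle L t) : f ω = 0 := by
  by_contra h0
  have hmem : ω ∈ Function.support f := h0
  rw [hf.supp] at hmem
  obtain ⟨j, hj⟩ := Set.mem_iUnion.mp hmem
  rcases le_or_gt j (t + 1) with hle | hgt
  · exact hL ⟨j, take j ω, hj, hle, fun k => rfl⟩
  · obtain ⟨j₀, hj₀t, hbefore, hafter⟩ := theta_from hθ hTle
    have hTw : take (j₀ + 1) ω ∈ Tword T j₀ :=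
      ⟨fun i hi => hbefore i hi, hafter j₀ le_rfl⟩
    have hLgt : take (j₀ + 1) ω ∈ Lgt L j₀ :=
      ⟨j, by omega, take j ω, hj, by omega, fun k => rfl⟩
    have := hf.resp j₀
    rw [Set.eq_empty_iff_forall_notMem] at this
    exact this _ ⟨hLgt, hTw⟩

lemma w_eq_theta (hsc1 : ∀ x, sc x ≤ 1) (hscT : ∀ x ∈ T, sc x = 1)
    (ω : ℕ → Ω) (hθ : ω ∈ Theta T) (hTle : take (t + 1) ω ∈ Tle T t) :
    w sc ω = wt sc t (take (t + 1) ω) := by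
  obtain ⟨j₀, hj₀t, -, hafter⟩ := theta_from hθ hTle
  exact w_eq_wt hsc1 ω fun n hn => hscT _ (hafter n (by omega))

end Aux

/-- **Finite approximation theorem.** -/
theorem finite_approximation
    (M : MarkovSetting Ω) (T : Set Ω) (hT : MeasurableSet T)
    (hκT : ∀ ω ∈ T, M.κ ω = Measure.dirac ω)
    (sc : Ω → ℝ≥0∞) (hsc : Measurable sc) (hsc1 : ∀ x, sc x ≤ 1)
    (hscT : ∀ ω ∈ T, sc ω = 1) (star : Ω) (t : ℕ)
    (Hpos : 0 < ∫⁻ u, (Tle T t).indicator 1 u * wt sc t u ∂(M.μF t))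
    (f : (ℕ → Ω) → ℝ≥0∞) (L : (j : ℕ) → Set (Fin j → Ω))
    (hf : IsPrefixClosed T f L) :
    0 < ∫⁻ ω, w sc ω ∂M.μI ∧
    ∀ Mb : ℝ≥0∞, (∀ ω, f ω ≤ Mb) →
      (∫⁻ u, ft star t f u * ((Lle L t ∩ Tle T t).indicator 1 u) * wt sc t u ∂(M.μF t)) /
          (∫⁻ u, wt sc t u ∂(M.μF t)) ≤
        (∫⁻ ω, f ω * w sc ω ∂M.μI) / (∫⁻ ω, w sc ω ∂M.μI) ∧
      (∫⁻ ω, f ω * w sc ω ∂M.μI) / (∫⁻ ω, w sc ω ∂M.μI) ≤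
        ((∫⁻ u, ft star t f u * ((Lle L t ∩ Tle T t).indicator 1 u) * wt sc t u ∂(M.μF t)) /
            (∫⁻ u, wt sc t u ∂(M.μF t))) *
            ((∫⁻ u, wt sc t u ∂(M.μF t)) /
              (∫⁻ u, (Tle T t).indicator 1 u * wt sc t u ∂(M.μF t))) +
          Mb * ((∫⁻ u, wt sc t u ∂(M.μF t)) /
              (∫⁻ u, (Tle T t).indicator 1 u * wt sc t u ∂(M.μF t)) - 1) := by
  classical
  haveI := M.probI
  haveI : IsProbabilityMeasure (M.μF t) := probF M t
  have hwt : Measurable (wt sc t) := measurable_wt hsc t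
  have hTleM : MeasurableSet (Tle T t) := measurableSet_Tle hT t
  have hLleM : MeasurableSet (Lle L t) := measurableSet_Lle hf.measL t
  have hftM : Measurable (ft star t f) := hf.measF.comp (measurable_extendW star (t + 1))
  have hθae := theta_ae M hT hκT
  have hcv : ∀ g : (Fin (t + 1) → Ω) → ℝ≥0∞, Measurable g →
      ∫⁻ ω, g (take (t + 1) ω) ∂M.μI = ∫⁻ u, g u ∂(M.μF t) := by
    intro g hg
    rw [← M.proj t, lintegral_map hg (measurable_take _)]
  have hBtind : ∫⁻ u, (Tle T t).indicator 1 u * wt sc t u ∂(M.μF t)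
      = ∫⁻ u, (Tle T t).indicator (wt sc t) u ∂(M.μF t) := by
    refine lintegral_congr fun u => ?_
    by_cases h : u ∈ Tle T t <;>
      simp [Set.indicator_of_mem, Set.indicator_of_notMem, h]
  have hAtind : ∫⁻ u, ft star t f u * ((Lle L t ∩ Tle T t).indicator 1 u) * wt sc t u ∂(M.μF t)
      = ∫⁻ u, (Lle L t ∩ Tle T t).indicator
          (fun u => ft star t f u * wt sc t u) u ∂(M.μF t) := by
    refine lintegral_congr fun u => ?_
    by_cases h : u ∈ Lle L t ∩ Tle T t <;>
      simp [Set.indicator_of_mem, Set.indicator_of_notMem, h, mul_comm, mul_assoc]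
  rw [hBtind] at Hpos
  rw [hAtind, hBtind]
  set Z := ∫⁻ ω, w sc ω ∂M.μI with hZ
  set A := ∫⁻ ω, f ω * w sc ω ∂M.μI with hA
  set Zt := ∫⁻ u, wt sc t u ∂(M.μF t) with hZt
  set Bt := ∫⁻ u, (Tle T t).indicator (wt sc t) u ∂(M.μF t) with hBt
  set At := ∫⁻ u, (Lle L t ∩ Tle T t).indicator
      (fun u => ft star t f u * wt sc t u) u ∂(M.μF t) with hAt
  -- pointwise facts on Theta
  have key_low : ∀ ω ∈ Theta T,
      (Lle L t ∩ Tle T t).indicator (fun u => ft star t f u * wt sc t u) (take (t + 1) ω)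
        ≤ f ω * w sc ω := by
    intro ω hθ
    by_cases h : take (t + 1) ω ∈ Lle L t ∩ Tle T t
    · simp only [Set.indicator_of_mem h]
      rw [← f_eq_ft hf star ω h.1, ← w_eq_theta hsc1 hscT ω hθ h.2]
    · rw [Set.indicator_of_notMem h]; exact zero_le
  have key_Z : ∀ ω ∈ Theta T,
      (Tle T t).indicator (wt sc t) (take (t + 1) ω) ≤ w sc ω := by
    intro ω hθ
    by_cases h : take (t + 1) ω ∈ Tle T t
    · rw [Set.indicator_of_mem h, ← w_eq_theta hsc1 hscT ω hθ h]
    · rw [Set.indicator_of_notMem h]; exact zero_le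
  -- main integral comparisons
  have hBleZ : Bt ≤ Z := by
    rw [hBt, ← hcv _ (hwt.indicator hTleM), hZ]
    exact lintegral_mono_ae (hθae.mono key_Z)
  have hAleA : At ≤ A := by
    rw [hAt, ← hcv _ ((show Measurable (fun u => ft star t f u * wt sc t u) from hftM.mul hwt).indicator (hLleM.inter hTleM)), hA]
    exact lintegral_mono_ae (hθae.mono key_low)
  have hZleZt : Z ≤ Zt := by
    rw [hZt, ← hcv _ hwt, hZ]
    exact lintegral_mono fun ω => w_le_wt ω
  have hZt1 : Zt ≤ 1 := by
    rw [hZt]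
    calc ∫⁻ u, wt sc t u ∂(M.μF t) ≤ ∫⁻ _, 1 ∂(M.μF t) :=
          lintegral_mono fun u =>
            Finset.prod_le_one (fun _ _ => zero_le) (fun i _ => hsc1 _)
      _ = 1 := by simp
  have hBtpos : 0 < Bt := Hpos
  have hBt0 : Bt ≠ 0 := hBtpos.ne'
  have hBttop : Bt ≠ ⊤ := ((hBleZ.trans (hZleZt.trans hZt1)).trans_lt ENNReal.one_lt_top).ne
  have hZt0 : Zt ≠ 0 := (hBtpos.trans_le (hBleZ.trans hZleZt)).ne'
  have hZttop : Zt ≠ ⊤ := (hZt1.trans_lt ENNReal.one_lt_top).ne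
  refine ⟨hBtpos.trans_le hBleZ, fun Mb hMb => ?_⟩
  constructor
  · exact ENNReal.div_le_div hAleA hZleZt
  · -- upper bound
    set Ct := ∫⁻ u, (Tle T t)ᶜ.indicator (wt sc t) u ∂(M.μF t) with hCt
    have hsplit : Bt + Ct = Zt := by
      rw [hBt, hCt, ← lintegral_add_left (hwt.indicator hTleM), hZt]
      refine lintegral_congr fun u => ?_
      by_cases h : u ∈ Tle T t <;>
        simp [Set.indicator_of_mem, Set.indicator_of_notMem, h]
    have key_up : ∀ ω ∈ Theta T, f ω * w sc ω ≤
        (Lle L t ∩ Tle T t).indicator (fun u => ft star t f u * wt sc t u) (take (t + 1) ω)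
          + Mb * (Tle T t)ᶜ.indicator (wt sc t) (take (t + 1) ω) := by
      intro ω hθ
      by_cases hTl : take (t + 1) ω ∈ Tle T t
      · by_cases hLl : take (t + 1) ω ∈ Lle L t
        · refine le_trans ?_ le_self_add
          simp only [Set.indicator_of_mem (show take (t + 1) ω ∈ Lle L t ∩ Tle T t
            from ⟨hLl, hTl⟩)]
          rw [← f_eq_ft hf star ω hLl, ← w_eq_theta hsc1 hscT ω hθ hTl]
        · rw [f_eq_zero hf ω hθ hTl hLl, zero_mul]
          exact zero_le
      · refine le_trans ?_ le_add_self
        rw [Set.indicator_of_mem (show take (t + 1) ω ∈ (Tle T t)ᶜ from hTl)]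
        exact mul_le_mul' (hMb ω) (w_le_wt ω)
    have hup : A ≤ At + Mb * Ct := by
      rw [hA]
      refine le_trans (lintegral_mono_ae (hθae.mono key_up)) ?_
      have m1 : Measurable fun ω : ℕ → Ω => (Lle L t ∩ Tle T t).indicator
          (fun u => ft star t f u * wt sc t u) (take (t + 1) ω) :=
        ((hftM.mul hwt).indicator (hLleM.inter hTleM)).comp (measurable_take _)
      have m2 : Measurable fun ω : ℕ → Ω =>
          (Tle T t)ᶜ.indicator (wt sc t) (take (t + 1) ω) :=
        (hwt.indicator hTleM.compl).comp (measurable_take _)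
      rw [lintegral_add_left m1, lintegral_const_mul Mb m2,
        hcv _ ((show Measurable (fun u => ft star t f u * wt sc t u) from hftM.mul hwt).indicator (hLleM.inter hTleM)),
        hcv _ (hwt.indicator hTleM.compl), ← hAt, ← hCt]
    have hABt : At / Zt * (Zt / Bt) = At / Bt := by
      rw [div_eq_mul_inv, div_eq_mul_inv, div_eq_mul_inv, mul_assoc,
        ← mul_assoc (Zt⁻¹), ENNReal.inv_mul_cancel hZt0 hZttop, one_mul]
    have hkey : Ct / Bt ≤ Zt / Bt - 1 := by
      refine ENNReal.le_sub_of_add_le_right ENNReal.one_ne_top ?_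
      have h1 : (1 : ℝ≥0∞) = Bt / Bt := (ENNReal.div_self hBt0 hBttop).symm
      rw [h1, ENNReal.div_add_div_same, add_comm Ct Bt, hsplit]
    calc A / Z ≤ (At + Mb * Ct) / Bt := ENNReal.div_le_div hup hBleZ
      _ = At / Bt + Mb * Ct / Bt := ENNReal.add_div
      _ = At / Zt * (Zt / Bt) + Mb * Ct / Bt := by rw [hABt]
      _ ≤ At / Zt * (Zt / Bt) + Mb * (Zt / Bt - 1) := by
          refine add_le_add_right ?_ _
          rw [mul_div_assoc]
          exact mul_le_mul_right hkey Mb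

end PaperPPG
end

section
/- The sequence t ↦ ∫_{Ωᵗ} 1_{T^{≤t}}·w_t dμᵗ is monotonically nondecreasing in t, and as t → ∞ it converges to ∫_{Ω^∞} 1_{T_f}·w dμ^∞. -/
open MeasureTheory ProbabilityTheory Filter Set
open scoped ENNReal

namespace PaperPPG

variable {Ω : Type*} [MeasurableSpace Ω]

/-- **Monotone convergence of the weight of terminated paths.** -/
theorem terminated_weight_tendsto
    (M : MarkovSetting Ω) (T : Set Ω) (hT : MeasurableSet T)
    (hκT : ∀ ω ∈ T, M.κ ω = Measure.dirac ω)
    (sc : Ω → ℝ≥0∞) (hsc : Measurable sc) (hsc1 : ∀ x, sc x ≤ 1)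
    (hscT : ∀ ω ∈ T, sc ω = 1) :
    Monotone (fun t : ℕ => ∫⁻ u, (Tle T t).indicator 1 u * wt sc t u ∂(M.μF t)) ∧
    Tendsto (fun t : ℕ => ∫⁻ u, (Tle T t).indicator 1 u * wt sc t u ∂(M.μF t)) atTop
      (nhds (∫⁻ ω, (Tf T).indicator 1 ω * w sc ω ∂M.μI)) := by
  classical
  haveI := M.probI
  haveI := M.markov
  -- measurability
  have mtake : ∀ t, Measurable (take t : (ℕ → Ω) → Fin t → Ω) := fun t =>
    measurable_pi_lambda _ fun i => measurable_pi_apply _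
  have mTle : ∀ t, MeasurableSet (Tle T t) := by
    intro t
    have : Tle T t = ⋃ i : Fin (t + 1), (fun u : Fin (t + 1) → Ω => u i) ⁻¹' T := by
      ext u; simp [Tle]
    rw [this]
    exact MeasurableSet.iUnion fun i => (measurable_pi_apply i) hT
  have mwt : ∀ t, Measurable (wt sc t) := fun t =>
    Finset.measurable_prod _ fun i _ => hsc.comp (measurable_pi_apply i)
  have mF : ∀ t, Measurable (fun u => (Tle T t).indicator (1 : (Fin (t + 1) → Ω) → ℝ≥0∞) u
      * wt sc t u) := fun t => (measurable_const.indicator (mTle t)).mul (mwt t)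
  set G : ℕ → (ℕ → Ω) → ℝ≥0∞ := fun t ω =>
    (Tle T t).indicator 1 (take (t + 1) ω) * wt sc t (take (t + 1) ω) with hGdef
  have measG : ∀ t, Measurable (G t) := fun t => (mF t).comp (mtake (t + 1))
  have key : ∀ t, ∫⁻ u, (Tle T t).indicator 1 u * wt sc t u ∂(M.μF t)
      = ∫⁻ ω, G t ω ∂M.μI := by
    intro t
    rw [← M.proj t, lintegral_map (mF t) (mtake (t + 1))]
  -- the bad events are null
  have badI : ∀ n, M.μI {ω | ω n ∈ T ∧ ω (n + 1) ∉ T} = 0 := by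
    intro n
    set B : Set (Fin (n + 2) → Ω) :=
      ((fun u : Fin (n + 2) → Ω => u (Fin.castSucc (Fin.last n))) ⁻¹' T) ∩
        ((fun u : Fin (n + 2) → Ω => u (Fin.last (n + 1))) ⁻¹' Tᶜ) with hB
    haveI : ∀ m, IsProbabilityMeasure (M.μF m) := fun m => by
      rw [← M.proj m]; exact Measure.isProbabilityMeasure_map (mtake (m + 1)).aemeasurable
    have mB : MeasurableSet B :=
      ((measurable_pi_apply _) hT).inter ((measurable_pi_apply _) hT.compl)
    have hpre : {ω : ℕ → Ω | ω n ∈ T ∧ ω (n + 1) ∉ T} = take (n + 2) ⁻¹' B := by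
      ext ω
      simp only [hB, Set.mem_setOf_eq, Set.mem_preimage, Set.mem_inter_iff, Set.mem_compl_iff]
      rfl
    have msnoc : Measurable (fun p : (Fin (n + 1) → Ω) × Ω =>
        (Fin.snoc p.1 p.2 : Fin (n + 2) → Ω)) := by
      apply measurable_pi_lambda
      intro i
      refine Fin.lastCases ?_ ?_ i
      · simpa [Fin.snoc_last] using measurable_snd
      · intro j
        simp only [Fin.snoc_castSucc]
        exact (measurable_pi_apply j).comp measurable_fst
    have hFB : M.μF (n + 1) B = 0 := by
      rw [M.step n, Measure.map_apply msnoc mB]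
      have hpre2 : (fun p : (Fin (n + 1) → Ω) × Ω => (Fin.snoc p.1 p.2 : Fin (n + 2) → Ω))
          ⁻¹' B = ((fun v : Fin (n + 1) → Ω => v (Fin.last n)) ⁻¹' T) ×ˢ Tᶜ := by
        ext p
        simp [hB, Fin.snoc_castSucc, Fin.snoc_last]
      rw [hpre2, Measure.compProd_apply (((measurable_pi_apply _) hT).prod hT.compl)]
      have : ∀ v : Fin (n + 1) → Ω,
          (M.κ.comap (fun v : Fin (n + 1) → Ω => v (Fin.last n)) (measurable_pi_apply _)) v
            (Prod.mk v ⁻¹' (((fun v : Fin (n + 1) → Ω => v (Fin.last n)) ⁻¹' T) ×ˢ Tᶜ)) = 0 := by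
        intro v
        by_cases hv : v (Fin.last n) ∈ T
        · have hpre3 : Prod.mk v ⁻¹'
              (((fun v : Fin (n + 1) → Ω => v (Fin.last n)) ⁻¹' T) ×ˢ Tᶜ) = Tᶜ := by
            ext x; simp [hv]
          rw [hpre3, Kernel.comap_apply, hκT _ hv, Measure.dirac_apply' _ hT.compl]
          simp [hv]
        · have hpre3 : Prod.mk v ⁻¹'
              (((fun v : Fin (n + 1) → Ω => v (Fin.last n)) ⁻¹' T) ×ˢ Tᶜ) = ∅ := by
            ext x; simp [hv]
          rw [hpre3]
          simp
      simp only [this, lintegral_zero]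
    rw [hpre, ← Measure.map_apply (mtake (n + 2)) mB, M.proj (n + 1)]
    exact hFB
  -- a.e. absorption
  have hS : ∀ᵐ ω ∂M.μI, ∀ n, ω n ∈ T → ω (n + 1) ∈ T := by
    have hnull : M.μI (⋃ n, {ω : ℕ → Ω | ω n ∈ T ∧ ω (n + 1) ∉ T}) = 0 :=
      measure_iUnion_null badI
    refine measure_mono_null ?_ hnull
    intro ω hω
    simp only [Set.mem_compl_iff, Set.mem_setOf_eq] at hω
    push_neg at hω
    obtain ⟨n, hn1, hn2⟩ := hω
    exact Set.mem_iUnion.2 ⟨n, hn1, hn2⟩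
  -- pointwise analysis on the good set
  have antiP : ∀ ω : ℕ → Ω, Antitone (fun t => ∏ i : Fin (t + 1), sc (ω i)) := by
    intro ω
    apply antitone_nat_of_succ_le
    intro t
    rw [Fin.prod_univ_castSucc]
    calc (∏ i : Fin (t + 1), sc (ω (Fin.castSucc i))) * sc (ω (Fin.last (t + 1)))
        ≤ (∏ i : Fin (t + 1), sc (ω (Fin.castSucc i))) * 1 := by
          gcongr; exact hsc1 _
      _ = ∏ i : Fin (t + 1), sc (ω i) := by
          rw [mul_one]
          exact Finset.prod_congr rfl fun i _ => by rw [Fin.coe_castSucc]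
  have pw : ∀ ω : ℕ → Ω, (∀ n, ω n ∈ T → ω (n + 1) ∈ T) →
      (Monotone fun t => G t ω) ∧ (⨆ t, G t ω) = (Tf T).indicator 1 ω * w sc ω := by
    intro ω hω
    by_cases hf : ω ∈ Tf T
    · have hfe : ∃ j, ω j ∈ T := hf
      set j := Nat.find hfe with hjdef
      have hj : ω j ∈ T := Nat.find_spec hfe
      have hjmin : ∀ i, i < j → ω i ∉ T := fun i hi => Nat.find_min hfe hi
      have habs : ∀ n, j ≤ n → ω n ∈ T := by
        intro n hn
        induction n, hn using Nat.le_induction with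
        | base => exact hj
        | succ n hn ih => exact hω n ih
      have keyP : ∀ t, j ≤ t →
          (∏ i : Fin (t + 1), sc (ω i)) = ∏ i : Fin (j + 1), sc (ω i) := by
        intro t ht
        induction t, ht using Nat.le_induction with
        | base => rfl
        | succ t ht ih =>
          rw [Fin.prod_univ_castSucc]
          have h1 : sc (ω (Fin.last (t + 1))) = 1 := hscT _ (habs (t + 1) (by omega))
          have h2 : (∏ i : Fin (t + 1), sc (ω (Fin.castSucc i)))
              = ∏ i : Fin (t + 1), sc (ω i) :=
            Finset.prod_congr rfl fun i _ => by rw [Fin.coe_castSucc]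
          rw [h1, mul_one, h2, ih]
      have hGval : ∀ t, G t ω = if j ≤ t then (∏ i : Fin (j + 1), sc (ω i)) else 0 := by
        intro t
        split_ifs with h
        · have hmem : take (t + 1) ω ∈ Tle T t := ⟨⟨j, by omega⟩, hj⟩
          rw [hGdef]
          simp only [Set.indicator_of_mem hmem, Pi.one_apply, one_mul]
          have : wt sc t (take (t + 1) ω) = ∏ i : Fin (t + 1), sc (ω i) := rfl
          rw [this, keyP t h]
        · have hmem : take (t + 1) ω ∉ Tle T t := by
            rintro ⟨i, hi⟩
            exact hjmin i (by omega) hi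
          rw [hGdef]
          simp only [Set.indicator_of_notMem hmem, zero_mul]
      have hw : w sc ω = ∏ i : Fin (j + 1), sc (ω i) := by
        refine le_antisymm (iInf_le _ j) (le_iInf fun t => ?_)
        by_cases h : j ≤ t
        · rw [keyP t h]
        · exact antiP ω (by omega : t ≤ j)
      constructor
      · intro a b hab
        show G a ω ≤ G b ω
        rw [hGval a, hGval b]
        split_ifs with h1 h2
        · exact le_rfl
        · omega
        · exact zero_le
        · exact le_rfl
      · rw [hw, Set.indicator_of_mem hf, Pi.one_apply, one_mul]
        refine le_antisymm (iSup_le fun t => ?_) ?_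
        · rw [hGval t]
          split_ifs
          · exact le_rfl
          · exact zero_le
        · have := hGval j
          rw [if_pos le_rfl] at this
          exact this ▸ le_iSup (fun t => G t ω) j
    · have hGz : ∀ t, G t ω = 0 := by
        intro t
        have hmem : take (t + 1) ω ∉ Tle T t := by
          rintro ⟨i, hi⟩
          exact hf ⟨i, hi⟩
        rw [hGdef]
        simp only [Set.indicator_of_notMem hmem, zero_mul]
      constructor
      · intro a b _
        show G a ω ≤ G b ω
        rw [hGz a, hGz b]
      · simp [hGz, Set.indicator_of_notMem hf]
  -- assemble
  have mon : Monotone (fun t => ∫⁻ ω, G t ω ∂M.μI) := fun a b hab =>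
    lintegral_mono_ae (hS.mono fun ω h => (pw ω h).1 hab)
  constructor
  · intro a b hab
    simp only [key]
    exact mon hab
  · have hlim : ∫⁻ ω, (Tf T).indicator 1 ω * w sc ω ∂M.μI
        = ⨆ t, ∫⁻ ω, G t ω ∂M.μI := by
      rw [← lintegral_iSup' (fun t => (measG t).aemeasurable)
        (hS.mono fun ω h => (pw ω h).1)]
      exact lintegral_congr_ae (hS.mono fun ω h => ((pw ω h).2).symm)
    simp only [key]
    rw [hlim]
    exact tendsto_atTop_iSup mon

end PaperPPG
end

section
/- Let (L_j)_{j≥0}, with L_j ⊆ Ω^j, be a prefix-free, T-respectful sequence of languages. Then for every t ≥ 1: ∪_{j≥0} ⟨L_j⟩ ⊆ ⟨L^{≤t} ∩ T^{≤t}⟩ ∪ (Ω^∞ ∖ ⟨T^{≤t}⟩). -/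
open MeasureTheory ProbabilityTheory Filter Set
open scoped ENNReal

namespace PaperPPG

variable {Ω : Type*} [MeasurableSpace Ω]

/-! If `ω ∈ ⟨L_j⟩` enters `T` by time `t`, first at time `n`, then `j ≤ n + 1`: otherwise the first
`n + 1` letters of `ω` would be a word of `T_{n+1}` that is a proper prefix of a word of `L_j`,
contradicting `T`-respectfulness. Hence the first `t + 1` letters of `ω` have a prefix in `L_j`. -/

section

omit [MeasurableSpace Ω]

variable {T : Set Ω} {L : (j : ℕ) → Set (Fin j → Ω)}

theorem isPref_take_take {i j : ℕ} (h : i ≤ j) (ω : ℕ → Ω) : IsPref (take i ω) (take j ω) :=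
  ⟨h, fun _ => rfl⟩

theorem take_mem_Tword {ω : ℕ → Ω} {n : ℕ} (hbefore : ∀ k < n, ω k ∉ T) (hn : ω n ∈ T) :
    take (n + 1) ω ∈ Tword T n :=
  ⟨fun i hi => hbefore i hi, hn⟩

theorem mem_cyl_Lle_of_mem_cyl {ω : ℕ → Ω} {j t : ℕ} (hω : ω ∈ cyl (L j)) (hj : j ≤ t + 1) :
    ω ∈ cyl (Lle L t) :=
  ⟨j, take j ω, hω, isPref_take_take hj ω⟩

theorem TRespectful.le_succ_of_mem_cyl (hresp : TRespectful T L) {ω : ℕ → Ω} {j n : ℕ}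
    (hω : ω ∈ cyl (L j)) (hbefore : ∀ k < n, ω k ∉ T) (hn : ω n ∈ T) : j ≤ n + 1 := by
  by_contra! hj
  have hmem : take (n + 1) ω ∈ Lgt L n ∩ Tword T n :=
    ⟨⟨j, hj, take j ω, hω, isPref_take_take hj.le ω⟩, take_mem_Tword hbefore hn⟩
  simp [hresp n] at hmem

end

theorem support_subset_cylinders_general
    (T : Set Ω) (L : (j : ℕ) → Set (Fin j → Ω))
    (hresp : TRespectful T L) :
    ∀ t : ℕ, (⋃ j : ℕ, cyl (L j)) ⊆ cyl (Lle L t ∩ Tle T t) ∪ (cyl (Tle T t))ᶜ := by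
  classical
  intro t ω hω
  by_cases hT : ω ∈ cyl (Tle T t)
  · obtain ⟨j, hj⟩ := mem_iUnion.mp hω
    obtain ⟨i, hi⟩ := hT
    have hhit : ∃ n, ω n ∈ T := ⟨i, hi⟩
    have hfirst_le : Nat.find hhit ≤ t := (Nat.find_min' hhit hi).trans (Nat.lt_succ_iff.mp i.isLt)
    have hj_le : j ≤ Nat.find hhit + 1 :=
      hresp.le_succ_of_mem_cyl hj (fun _ => Nat.find_min hhit) (Nat.find_spec hhit)
    exact Or.inl ⟨mem_cyl_Lle_of_mem_cyl hj (by omega), i, hi⟩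
  · exact Or.inr hT

/-- **Support inclusion**: for a prefix-free, T-respectful sequence of languages,
`∪_j ⟨L_j⟩ ⊆ ⟨L^{≤t} ∩ T^{≤t}⟩ ∪ ⟨T^{≤t}⟩ᶜ`. -/
theorem support_subset_cylinders
    (T : Set Ω) (L : (j : ℕ) → Set (Fin j → Ω))
    (hpf : PrefixFree L) (hresp : TRespectful T L) :
    ∀ t : ℕ, (⋃ j : ℕ, cyl (L j)) ⊆ cyl (Lle L t ∩ Tle T t) ∪ (cyl (Tle T t))ᶜ :=
  support_subset_cylinders_general T L hresp

end PaperPPG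
end
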